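/- Let i, j ≥ 1 be integers, let S_n^{(L)}, S_n^{(M)}, S_n^{(R)} be three independent simple symmetric random walks started from −2i, 0, 2j built from independent i.i.d. Rademacher sequences, with distances D_n^{(L,M)} = S_n^{(M)} − S_n^{(L)}, D_n^{(M,R)} = S_n^{(R)} − S_n^{(M)} and first collision time τ_C = inf{n ≥ 1 : D_n^{(L,M)} D_n^{(M,R)} = 0}. Then lim_{n→∞} E[D_{n∧τ_C}^{(L,M)} D_{n∧τ_C}^{(M,R)}] = 0. -/

import Mathlib

open MeasureTheory ProbabilityTheory
open scoped ENNReal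

/-- Distance `D_n^{(L,M)} = S_n^{(M)} - S_n^{(L)}` between the middle walk
(started at `0`) and the left walk (started at `-2i`). -/
noncomputable def distLM {Ω : Type*} (i : ℕ) (IL IM : ℕ → Ω → ℝ) (n : ℕ) (ω : Ω) : ℝ :=
  (∑ k ∈ Finset.range n, IM k ω) - (-(2 * (i : ℝ)) + ∑ k ∈ Finset.range n, IL k ω)

/-- Distance `D_n^{(M,R)} = S_n^{(R)} - S_n^{(M)}` between the right walk
(started at `2j`) and the middle walk (started at `0`). -/
noncomputable def distMR {Ω : Type*} (j : ℕ) (IM IR : ℕ → Ω → ℝ) (n : ℕ) (ω : Ω) : ℝ :=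
  (2 * (j : ℝ) + ∑ k ∈ Finset.range n, IR k ω) - (∑ k ∈ Finset.range n, IM k ω)

/-- First collision time `τ_C = inf {n ≥ 1 : D_n^{(L,M)} D_n^{(M,R)} = 0}`,
with values in `ℕ∞` (and `inf ∅ = ∞`). -/
noncomputable def collisionTime {Ω : Type*} (i j : ℕ) (IL IM IR : ℕ → Ω → ℝ) (ω : Ω) : ℕ∞ :=
  ⨅ (n : ℕ) (_ : 1 ≤ n ∧ distLM i IL IM n ω * distMR j IM IR n ω = 0), (n : ℕ∞)

/-- The stopped index `n ∧ τ_C` (equal to `n` when `τ_C = ∞`). -/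
noncomputable def stoppedIdx {Ω : Type*} (i j : ℕ) (IL IM IR : ℕ → Ω → ℝ) (n : ℕ) (ω : Ω) : ℕ :=
  (min (n : ℕ∞) (collisionTime i j IL IM IR ω)).toNat

set_option linter.unusedSectionVars false

section Det
variable {Ω : Type*} (i j : ℕ) (IL IM IR : ℕ → Ω → ℝ) (ω : Ω)

/-- product at time n -/
noncomputable def prodD (n : ℕ) : ℝ := distLM i IL IM n ω * distMR j IM IR n ω

lemma ct_le_of_mem {m : ℕ} (h1 : 1 ≤ m) (h2 : prodD i j IL IM IR ω m = 0) :
    collisionTime i j IL IM IR ω ≤ (m : ℕ∞) := by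
  exact iInf_le_of_le m (by simp [prodD] at h2; simp [h2, h1])

lemma lt_ct_iff (n : ℕ) :
    (n : ℕ∞) < collisionTime i j IL IM IR ω ↔
      ∀ m, 1 ≤ m → m ≤ n → prodD i j IL IM IR ω m ≠ 0 := by
  constructor
  · intro h m h1 h2 hP
    have := ct_le_of_mem i j IL IM IR ω h1 hP
    have : (n : ℕ∞) < (m : ℕ∞) := lt_of_lt_of_le h this
    exact absurd (Nat.cast_lt.mp this) (by omega)
  · intro h
    rw [show ((n : ℕ∞) = (n : ℕ∞)) from rfl]
    have : ((n+1 : ℕ) : ℕ∞) ≤ collisionTime i j IL IM IR ω := by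
      refine le_iInf fun m => le_iInf fun hm => ?_
      have : ¬ m ≤ n := fun hle => h m hm.1 hle (by simpa [prodD] using hm.2)
      exact_mod_cast (show n+1 ≤ m by omega)
    calc (n : ℕ∞) < ((n+1:ℕ) : ℕ∞) := by exact_mod_cast Nat.lt_succ_self n
      _ ≤ _ := this

lemma ct_attained {m : ℕ} (h : collisionTime i j IL IM IR ω = (m : ℕ∞)) :
    1 ≤ m ∧ prodD i j IL IM IR ω m = 0 := by
  by_contra hcon
  have hnot : ∀ l, 1 ≤ l → l ≤ m → prodD i j IL IM IR ω l ≠ 0 → True := fun _ _ _ _ => trivial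
  -- use lt_ct_iff at n = m: show (m:ℕ∞) < ct, contradiction with h
  have : (m : ℕ∞) < collisionTime i j IL IM IR ω := by
    rw [lt_ct_iff]
    intro l h1 h2 hP
    have hle := ct_le_of_mem i j IL IM IR ω h1 hP
    rw [h] at hle
    have hlm : m ≤ l := by exact_mod_cast hle
    have : l = m := le_antisymm h2 hlm
    subst this
    exact hcon ⟨h1, hP⟩
  rw [h] at this; exact lt_irrefl _ this

lemma si_of_le {n : ℕ} (h : (n : ℕ∞) ≤ collisionTime i j IL IM IR ω) :
    stoppedIdx i j IL IM IR n ω = n := by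
  simp [stoppedIdx, min_eq_left h]

lemma si_of_ge {n : ℕ} (h : collisionTime i j IL IM IR ω ≤ (n : ℕ∞)) :
    stoppedIdx i j IL IM IR n ω = (collisionTime i j IL IM IR ω).toNat := by
  simp [stoppedIdx, min_eq_right h]

lemma prod_si_eq_zero {n : ℕ} (h : collisionTime i j IL IM IR ω ≤ (n : ℕ∞)) :
    prodD i j IL IM IR ω (stoppedIdx i j IL IM IR n ω) = 0 := by
  rw [si_of_ge i j IL IM IR ω h]
  have hfin : collisionTime i j IL IM IR ω ≠ ⊤ := by
    intro htop; rw [htop] at h; exact absurd (top_le_iff.mp h) (by simp)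
  set c := collisionTime i j IL IM IR ω with hc
  lift c to ℕ using hfin with m hm
  simp only [ENat.toNat_coe]
  exact (ct_attained i j IL IM IR ω hc.symm).2

end Det

section Det2
variable {Ω : Type*} {i j : ℕ} {IL IM IR : ℕ → Ω → ℝ} {ω : Ω}

lemma distLM_succ (n : ℕ) :
    distLM i IL IM (n+1) ω = distLM i IL IM n ω + (IM n ω - IL n ω) := by
  simp [distLM, Finset.sum_range_succ]; ring

lemma distMR_succ (n : ℕ) :
    distMR j IM IR (n+1) ω = distMR j IM IR n ω + (IR n ω - IM n ω) := by
  simp [distMR, Finset.sum_range_succ]; ring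

lemma distLM_zero : distLM i IL IM 0 ω = 2 * i := by simp [distLM]

lemma distMR_zero : distMR j IM IR 0 ω = 2 * j := by simp [distMR]

lemma distLM_even (hL : ∀ k, IL k ω = 1 ∨ IL k ω = -1)
    (hM : ∀ k, IM k ω = 1 ∨ IM k ω = -1) (n : ℕ) :
    ∃ z : ℤ, distLM i IL IM n ω = 2 * z := by
  induction n with
  | zero => exact ⟨i, by simp [distLM]⟩
  | succ n ih =>
    obtain ⟨z, hz⟩ := ih
    rcases hM n with h1 | h1 <;> rcases hL n with h2 | h2
    · exact ⟨z, by rw [distLM_succ, hz, h1, h2]; ring⟩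
    · exact ⟨z + 1, by rw [distLM_succ, hz, h1, h2]; push_cast; ring⟩
    · exact ⟨z - 1, by rw [distLM_succ, hz, h1, h2]; push_cast; ring⟩
    · exact ⟨z, by rw [distLM_succ, hz, h1, h2]; ring⟩

lemma distMR_even (hM : ∀ k, IM k ω = 1 ∨ IM k ω = -1)
    (hR : ∀ k, IR k ω = 1 ∨ IR k ω = -1) (n : ℕ) :
    ∃ z : ℤ, distMR j IM IR n ω = 2 * z := by
  induction n with
  | zero => exact ⟨j, by simp [distMR]⟩
  | succ n ih =>
    obtain ⟨z, hz⟩ := ih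
    rcases hR n with h1 | h1 <;> rcases hM n with h2 | h2
    · exact ⟨z, by rw [distMR_succ, hz, h1, h2]; ring⟩
    · exact ⟨z + 1, by rw [distMR_succ, hz, h1, h2]; push_cast; ring⟩
    · exact ⟨z - 1, by rw [distMR_succ, hz, h1, h2]; push_cast; ring⟩
    · exact ⟨z, by rw [distMR_succ, hz, h1, h2]; ring⟩

/-- key positivity: before the collision time both distances are ≥ 2. -/
lemma dist_pos_of_lt_ct (hi : 1 ≤ i) (hj : 1 ≤ j)
    (hL : ∀ k, IL k ω = 1 ∨ IL k ω = -1)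
    (hM : ∀ k, IM k ω = 1 ∨ IM k ω = -1)
    (hR : ∀ k, IR k ω = 1 ∨ IR k ω = -1)
    {n : ℕ} (h : (n : ℕ∞) < collisionTime i j IL IM IR ω) :
    2 ≤ distLM i IL IM n ω ∧ 2 ≤ distMR j IM IR n ω := by
  induction n with
  | zero =>
    refine ⟨?_, ?_⟩
    · rw [distLM_zero]
      have : (1:ℝ) ≤ (i:ℝ) := by exact_mod_cast hi
      linarith
    · rw [distMR_zero]
      have : (1:ℝ) ≤ (j:ℝ) := by exact_mod_cast hj
      linarith
  | succ n ih =>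
    have hn : (n : ℕ∞) < collisionTime i j IL IM IR ω :=
      lt_of_le_of_lt (by exact_mod_cast Nat.le_succ n) h
    obtain ⟨hA, hB⟩ := ih hn
    have hPne : prodD i j IL IM IR ω (n+1) ≠ 0 :=
      (lt_ct_iff i j IL IM IR ω (n+1)).mp h (n+1) (by omega) le_rfl
    have hAne : distLM i IL IM (n+1) ω ≠ 0 := fun h0 => hPne (by simp [prodD, h0])
    have hBne : distMR j IM IR (n+1) ω ≠ 0 := fun h0 => hPne (by simp [prodD, h0])
    have hstepA : -2 ≤ IM n ω - IL n ω := by rcases hM n with h1|h1 <;> rcases hL n with h2|h2 <;> rw [h1,h2] <;> norm_num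
    have hstepB : -2 ≤ IR n ω - IM n ω := by rcases hR n with h1|h1 <;> rcases hM n with h2|h2 <;> rw [h1,h2] <;> norm_num
    have hA1 : 0 < distLM i IL IM (n+1) ω := by
      have : 0 ≤ distLM i IL IM (n+1) ω := by rw [distLM_succ]; linarith
      exact lt_of_le_of_ne this (Ne.symm hAne)
    have hB1 : 0 < distMR j IM IR (n+1) ω := by
      have : 0 ≤ distMR j IM IR (n+1) ω := by rw [distMR_succ]; linarith
      exact lt_of_le_of_ne this (Ne.symm hBne)
    obtain ⟨z, hz⟩ := distLM_even (i := i) hL hM (n+1)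
    obtain ⟨w, hw⟩ := distMR_even (j := j) hM hR (n+1)
    constructor
    · rw [hz]; rw [hz] at hA1
      have : (0:ℤ) < z := by exact_mod_cast (by linarith : (0:ℝ) < z)
      have : (1:ℤ) ≤ z := this
      have : (1:ℝ) ≤ (z:ℝ) := by exact_mod_cast this
      linarith
    · rw [hw]; rw [hw] at hB1
      have : (0:ℤ) < w := by exact_mod_cast (by linarith : (0:ℝ) < w)
      have : (1:ℤ) ≤ w := this
      have : (1:ℝ) ≤ (w:ℝ) := by exact_mod_cast this
      linarith

end Det2

section Prob
variable {Ω : Type*} [MeasurableSpace Ω]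

/-- the past before time `n`, as a function into the product space -/
noncomputable def phiMap (I : Fin 3 → ℕ → Ω → ℝ) (n : ℕ) : Ω → (Fin 3 × ℕ → ℝ) :=
  fun ω p => if p.2 < n then I p.1 p.2 ω else 0

noncomputable def tripleMap (I : Fin 3 → ℕ → Ω → ℝ) (n : ℕ) : Ω → (ℝ × ℝ) × ℝ :=
  fun ω => ((I 0 n ω, I 1 n ω), I 2 n ω)

noncomputable def dLM (i n : ℕ) : (Fin 3 × ℕ → ℝ) → ℝ :=
  fun v => 2 * i + ∑ k ∈ Finset.range n, (v (1, k) - v (0, k))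

noncomputable def dMR (j n : ℕ) : (Fin 3 × ℕ → ℝ) → ℝ :=
  fun v => 2 * j + ∑ k ∈ Finset.range n, (v (2, k) - v (1, k))

def evSet (i j n : ℕ) : Set (Fin 3 × ℕ → ℝ) :=
  {v | ∀ m, 1 ≤ m → m ≤ n → dLM i m v * dMR j m v ≠ 0}

def eSet (i j : ℕ) (I : Fin 3 → ℕ → Ω → ℝ) (n : ℕ) : Set Ω :=
  {ω | (n : ℕ∞) < collisionTime i j (I 0) (I 1) (I 2) ω}

variable {I : Fin 3 → ℕ → Ω → ℝ} {i j n : ℕ} {ω : Ω}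

lemma distLM_eq (IL IM : ℕ → Ω → ℝ) (m : ℕ) :
    distLM i IL IM m ω = 2 * i + ∑ k ∈ Finset.range m, (IM k ω - IL k ω) := by
  simp [distLM, Finset.sum_sub_distrib]; ring

lemma distMR_eq (IM IR : ℕ → Ω → ℝ) (m : ℕ) :
    distMR j IM IR m ω = 2 * j + ∑ k ∈ Finset.range m, (IR k ω - IM k ω) := by
  simp [distMR, Finset.sum_sub_distrib]; ring

lemma dLM_phi {m : ℕ} (h : m ≤ n) :
    dLM i m (phiMap I n ω) = distLM i (I 0) (I 1) m ω := by
  rw [distLM_eq, dLM]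
  congr 1
  refine Finset.sum_congr rfl fun k hk => ?_
  have : k < n := lt_of_lt_of_le (Finset.mem_range.mp hk) h
  simp [phiMap, this]

lemma dMR_phi {m : ℕ} (h : m ≤ n) :
    dMR j m (phiMap I n ω) = distMR j (I 1) (I 2) m ω := by
  rw [distMR_eq, dMR]
  congr 1
  refine Finset.sum_congr rfl fun k hk => ?_
  have : k < n := lt_of_lt_of_le (Finset.mem_range.mp hk) h
  simp [phiMap, this]

lemma mem_evSet_phi {k : ℕ} (h : k ≤ n) :
    phiMap I n ω ∈ evSet i j k ↔ ω ∈ eSet i j I k := by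
  unfold evSet eSet
  rw [Set.mem_setOf_eq, Set.mem_setOf_eq, lt_ct_iff]
  constructor
  · intro H m h1 h2
    have := H m h1 h2
    rwa [dLM_phi (le_trans h2 h), dMR_phi (le_trans h2 h), ← prodD] at this
  · intro H m h1 h2
    rw [dLM_phi (le_trans h2 h), dMR_phi (le_trans h2 h)]
    exact H m h1 h2

lemma measurable_dLM : Measurable (dLM i n) := by
  unfold dLM
  refine Measurable.const_add ?_ _
  exact Finset.measurable_sum _ fun k _ => (measurable_pi_apply _).sub (measurable_pi_apply _)

lemma measurable_dMR : Measurable (dMR j n) := by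
  unfold dMR
  refine Measurable.const_add ?_ _
  exact Finset.measurable_sum _ fun k _ => (measurable_pi_apply _).sub (measurable_pi_apply _)

lemma measurableSet_evSet : MeasurableSet (evSet i j n) := by
  have : evSet i j n = ⋂ (m : ℕ) (_ : 1 ≤ m ∧ m ≤ n),
      {v | dLM i m v * dMR j m v ≠ 0} := by
    ext v
    simp only [evSet, Set.mem_setOf_eq, Set.mem_iInter, and_imp]
  rw [this]
  refine MeasurableSet.iInter fun m => MeasurableSet.iInter fun _ => ?_
  exact (measurable_dLM.mul measurable_dMR) (measurableSet_singleton 0) |>.compl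

lemma measurable_phiMap (hmeas : ∀ a k, Measurable (I a k)) (n : ℕ) :
    Measurable (phiMap I n) := by
  refine measurable_pi_lambda _ fun p => ?_
  unfold phiMap
  by_cases h : p.2 < n
  · simp only [h, if_true]; exact hmeas p.1 p.2
  · simp only [h, if_false]; exact measurable_const

lemma measurable_tripleMap (hmeas : ∀ a k, Measurable (I a k)) (n : ℕ) :
    Measurable (tripleMap I n) :=
  ((hmeas 0 n).prodMk (hmeas 1 n)).prodMk (hmeas 2 n)

lemma measurableSet_eSet (hmeas : ∀ a k, Measurable (I a k)) (n : ℕ) :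
    MeasurableSet (eSet i j I n) := by
  have : eSet i j I n = phiMap I n ⁻¹' evSet i j n := by
    ext ω; exact (mem_evSet_phi le_rfl).symm
  rw [this]
  exact measurable_phiMap hmeas n measurableSet_evSet

end Prob

section Prob2
variable {Ω : Type*} [MeasurableSpace Ω] {μ : Measure Ω} [IsProbabilityMeasure μ]
  {I : Fin 3 → ℕ → Ω → ℝ} {i j : ℕ}

lemma indep_past_triple (hmeas : ∀ a k, Measurable (I a k))
    (hindep : iIndepFun
      (fun (p : Fin 3 × ℕ) ω => I p.1 p.2 ω) μ) (n : ℕ) :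
    IndepFun (phiMap I n) (tripleMap I n) μ := by
  classical
  set S : Finset (Fin 3 × ℕ) := Finset.univ ×ˢ Finset.range n with hS
  set T : Finset (Fin 3 × ℕ) := Finset.univ ×ˢ {n} with hT
  have hST : Disjoint S T := by
    rw [Finset.disjoint_left]
    rintro ⟨a, k⟩ hk hk'
    simp [hS, hT, Finset.mem_product] at hk hk'
    omega
  have hbase := hindep.indepFun_finset S T hST (fun p => hmeas p.1 p.2)
  have h0 : ((0 : Fin 3), n) ∈ T := by simp [hT]
  have h1 : ((1 : Fin 3), n) ∈ T := by simp [hT]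
  have h2 : ((2 : Fin 3), n) ∈ T := by simp [hT]
  set gS : (S → ℝ) → (Fin 3 × ℕ → ℝ) := fun v p => if h : p ∈ S then v ⟨p, h⟩ else 0 with hgS
  set gT : (T → ℝ) → (ℝ × ℝ) × ℝ := fun v => ((v ⟨(0, n), h0⟩, v ⟨(1, n), h1⟩), v ⟨(2, n), h2⟩)
    with hgT
  have hmgS : Measurable gS := by
    refine measurable_pi_lambda _ fun p => ?_
    by_cases h : p ∈ S
    · simp only [hgS, h, dif_pos]; exact measurable_pi_apply _
    · simp only [hgS, h, dif_neg, not_false_iff]; exact measurable_const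
  have hmgT : Measurable gT := by
    refine Measurable.prodMk (Measurable.prodMk ?_ ?_) ?_ <;> exact measurable_pi_apply _
  have := hbase.comp hmgS hmgT
  have heqS : gS ∘ (fun ω (p : S) => I p.1.1 p.1.2 ω) = phiMap I n := by
    funext ω p
    by_cases h : p ∈ S
    · have hk : p.2 < n := by
        have := h; simp [hS, Finset.mem_product] at this; exact this
      simp [hgS, Function.comp, h, phiMap, hk]
    · have hk : ¬ p.2 < n := by
        intro hlt; exact h (by simp [hS, Finset.mem_product, hlt])
      simp [hgS, Function.comp, h, phiMap, hk]
  have heqT : gT ∘ (fun ω (p : T) => I p.1.1 p.1.2 ω) = tripleMap I n := by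
    funext ω; simp [hgT, Function.comp, tripleMap]
  rwa [heqS, heqT] at this

/-- master factorization: expectation of (past function) × (step function) splits. -/
lemma integral_past_mul_step (hmeas : ∀ a k, Measurable (I a k))
    (hindep : iIndepFun
      (fun (p : Fin 3 × ℕ) ω => I p.1 p.2 ω) μ) (n : ℕ)
    {g : (Fin 3 × ℕ → ℝ) → ℝ} (hg : Measurable g)
    {h : (ℝ × ℝ) × ℝ → ℝ} (hh : Measurable h) :
    ∫ ω, g (phiMap I n ω) * h (tripleMap I n ω) ∂μ =
      (∫ ω, g (phiMap I n ω) ∂μ) * ∫ ω, h (tripleMap I n ω) ∂μ := by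
  have hind := (indep_past_triple hmeas hindep n).comp hg hh
  exact hind.integral_fun_mul_eq_mul_integral
    ((hg.comp (measurable_phiMap hmeas n)).aestronglyMeasurable)
    ((hh.comp (measurable_tripleMap hmeas n)).aestronglyMeasurable)

variable (hrad : ∀ a k, μ {ω | I a k ω = 1} = 1 / 2 ∧ μ {ω | I a k ω = -1} = 1 / 2)
  (hmeas : ∀ a k, Measurable (I a k))

include hrad hmeas in
lemma ae_pm_one (a : Fin 3) (k : ℕ) : ∀ᵐ ω ∂μ, I a k ω = 1 ∨ I a k ω = -1 := by
  have hs : MeasurableSet {ω | I a k ω = 1} := hmeas a k (measurableSet_singleton 1)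
  have ht : MeasurableSet {ω | I a k ω = -1} := hmeas a k (measurableSet_singleton (-1))
  have hdisj : Disjoint {ω | I a k ω = 1} {ω | I a k ω = -1} := by
    rw [Set.disjoint_left]; intro ω h1 h2
    simp only [Set.mem_setOf_eq] at h1 h2
    rw [h1] at h2; norm_num at h2
  have hunion : μ ({ω | I a k ω = 1} ∪ {ω | I a k ω = -1}) = 1 := by
    rw [measure_union hdisj ht, (hrad a k).1, (hrad a k).2]
    rw [ENNReal.div_add_div_same]
    rw [one_add_one_eq_two]
    exact ENNReal.div_self (two_ne_zero) (ENNReal.ofNat_ne_top)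
  have : μ ({ω | I a k ω = 1} ∪ {ω | I a k ω = -1})ᶜ = 0 := by
    rw [measure_compl (hs.union ht) (measure_ne_top _ _), hunion, measure_univ]
    simp
  filter_upwards [MeasureTheory.measure_eq_zero_iff_ae_notMem.mp this] with ω hω
  by_contra hcon
  push_neg at hcon
  exact hω (by simp [Set.mem_union, Set.mem_setOf_eq]; tauto)

include hrad hmeas in
lemma ae_good : ∀ᵐ ω ∂μ, ∀ a k, I a k ω = 1 ∨ I a k ω = -1 := by
  rw [MeasureTheory.ae_all_iff]
  intro a
  rw [MeasureTheory.ae_all_iff]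
  intro k
  exact ae_pm_one hrad hmeas a k

include hrad hmeas in
lemma integrable_I (a : Fin 3) (k : ℕ) : Integrable (I a k) μ := by
  refine Integrable.mono' (integrable_const 1) ((hmeas a k).aestronglyMeasurable) ?_
  filter_upwards [ae_pm_one hrad hmeas a k] with ω hω
  rcases hω with h | h <;> rw [h] <;> norm_num

include hrad hmeas in
lemma integral_I (a : Fin 3) (k : ℕ) : ∫ ω, I a k ω ∂μ = 0 := by
  have hs : MeasurableSet {ω | I a k ω = 1} := hmeas a k (measurableSet_singleton 1)
  have ht : MeasurableSet {ω | I a k ω = -1} := hmeas a k (measurableSet_singleton (-1))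
  have heq : I a k =ᵐ[μ] fun ω =>
      Set.indicator {ω | I a k ω = 1} (fun _ => (1:ℝ)) ω
      - Set.indicator {ω | I a k ω = -1} (fun _ => (1:ℝ)) ω := by
    filter_upwards [ae_pm_one hrad hmeas a k] with ω hω
    rcases hω with h | h
    · have h2 : ω ∉ {ω | I a k ω = -1} := by simp only [Set.mem_setOf_eq, h]; norm_num
      simp [Set.indicator_of_mem (show ω ∈ {ω | I a k ω = 1} from h),
        Set.indicator_of_notMem h2, h]
    · have h2 : ω ∉ {ω | I a k ω = 1} := by simp only [Set.mem_setOf_eq, h]; norm_num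
      simp [Set.indicator_of_mem (show ω ∈ {ω | I a k ω = -1} from h),
        Set.indicator_of_notMem h2, h]
  rw [integral_congr_ae heq, integral_sub, integral_indicator_const _ hs,
    integral_indicator_const _ ht, measureReal_def, measureReal_def, (hrad a k).1, (hrad a k).2]
  · simp
  · exact (integrable_const 1).indicator hs
  · exact (integrable_const 1).indicator ht

include hrad hmeas in
lemma integral_I_mul_I
    (hindep : iIndepFun
      (fun (p : Fin 3 × ℕ) ω => I p.1 p.2 ω) μ)
    {a b : Fin 3} (hab : a ≠ b) (k : ℕ) : ∫ ω, I a k ω * I b k ω ∂μ = 0 := by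
  have hind : IndepFun (I a k) (I b k) μ := by
    have := hindep.indepFun (show ((a, k) : Fin 3 × ℕ) ≠ (b, k) by simp [hab])
    exact this
  rw [hind.integral_fun_mul_eq_mul_integral ((hmeas a k).aestronglyMeasurable) ((hmeas b k).aestronglyMeasurable),
    integral_I hrad hmeas, zero_mul]

end Prob2

section Prob3
variable {Ω : Type*} [MeasurableSpace Ω] {μ : Measure Ω} [IsProbabilityMeasure μ]
  {I : Fin 3 → ℕ → Ω → ℝ} {i j : ℕ}

/-- indicator of the event `τ > n` -/
noncomputable def indE (i j : ℕ) (I : Fin 3 → ℕ → Ω → ℝ) (n : ℕ) : Ω → ℝ :=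
  (eSet i j I n).indicator (fun _ => 1)

/-- the product `D_n^{LM} * D_n^{MR}` -/
noncomputable def PP (i j : ℕ) (I : Fin 3 → ℕ → Ω → ℝ) (n : ℕ) (ω : Ω) : ℝ :=
  distLM i (I 0) (I 1) n ω * distMR j (I 1) (I 2) n ω

lemma PP_eq_prodD (n : ℕ) (ω : Ω) : PP i j I n ω = prodD i j (I 0) (I 1) (I 2) ω n := rfl

lemma indE_comp_phi {k n : ℕ} (h : k ≤ n) (ω : Ω) :
    (evSet i j k).indicator (fun _ => (1:ℝ)) (phiMap I n ω) = indE i j I k ω := by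
  unfold indE
  by_cases h' : ω ∈ eSet i j I k
  · rw [Set.indicator_of_mem ((mem_evSet_phi h).mpr h'), Set.indicator_of_mem h']
  · rw [Set.indicator_of_notMem (fun hc => h' ((mem_evSet_phi h).mp hc)),
      Set.indicator_of_notMem h']

lemma measurable_distLM (hmeas : ∀ a k, Measurable (I a k)) (n : ℕ) :
    Measurable (fun ω => distLM i (I 0) (I 1) n ω) := by
  unfold distLM
  exact (Finset.measurable_sum _ fun k _ => hmeas 1 k).sub
    (measurable_const.add (Finset.measurable_sum _ fun k _ => hmeas 0 k))

lemma measurable_distMR (hmeas : ∀ a k, Measurable (I a k)) (n : ℕ) :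
    Measurable (fun ω => distMR j (I 1) (I 2) n ω) := by
  unfold distMR
  exact (measurable_const.add (Finset.measurable_sum _ fun k _ => hmeas 2 k)).sub
    (Finset.measurable_sum _ fun k _ => hmeas 1 k)

lemma measurable_indE (hmeas : ∀ a k, Measurable (I a k)) (n : ℕ) :
    Measurable (indE i j I n (Ω := Ω)) :=
  measurable_const.indicator (measurableSet_eSet hmeas n)

lemma indE_nonneg (n : ℕ) (ω : Ω) : 0 ≤ indE i j I n ω := by
  unfold indE; exact Set.indicator_nonneg (fun _ _ => zero_le_one) ω

lemma indE_le_one (n : ℕ) (ω : Ω) : indE i j I n ω ≤ 1 := by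
  unfold indE
  by_cases h : ω ∈ eSet i j I n <;> simp [Set.indicator_apply, h]

lemma abs_distLM_le {ω : Ω} (hg : ∀ a k, I a k ω = 1 ∨ I a k ω = -1) (n : ℕ) :
    |distLM i (I 0) (I 1) n ω| ≤ 2*i + 2*n := by
  rw [distLM_eq]
  calc |2 * (i:ℝ) + ∑ k ∈ Finset.range n, (I 1 k ω - I 0 k ω)|
      ≤ |2 * (i:ℝ)| + |∑ k ∈ Finset.range n, (I 1 k ω - I 0 k ω)| := abs_add_le _ _
    _ ≤ 2*i + ∑ k ∈ Finset.range n, |I 1 k ω - I 0 k ω| := by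
        gcongr
        · rw [abs_of_nonneg (by positivity)]
        · exact Finset.abs_sum_le_sum_abs _ _
    _ ≤ 2*i + ∑ k ∈ Finset.range n, 2 := by
        gcongr with k hk
        rcases hg 1 k with h1|h1 <;> rcases hg 0 k with h2|h2 <;> rw [h1, h2] <;> norm_num
    _ = 2*i + 2*n := by simp [mul_comm]

lemma abs_distMR_le {ω : Ω} (hg : ∀ a k, I a k ω = 1 ∨ I a k ω = -1) (n : ℕ) :
    |distMR j (I 1) (I 2) n ω| ≤ 2*j + 2*n := by
  rw [distMR_eq]
  calc |2 * (j:ℝ) + ∑ k ∈ Finset.range n, (I 2 k ω - I 1 k ω)|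
      ≤ |2 * (j:ℝ)| + |∑ k ∈ Finset.range n, (I 2 k ω - I 1 k ω)| := abs_add_le _ _
    _ ≤ 2*j + ∑ k ∈ Finset.range n, |I 2 k ω - I 1 k ω| := by
        gcongr
        · rw [abs_of_nonneg (by positivity)]
        · exact Finset.abs_sum_le_sum_abs _ _
    _ ≤ 2*j + ∑ k ∈ Finset.range n, 2 := by
        gcongr with k hk
        rcases hg 2 k with h1|h1 <;> rcases hg 1 k with h2|h2 <;> rw [h1, h2] <;> norm_num
    _ = 2*j + 2*n := by simp [mul_comm]

lemma integrable_of_ae_bound {f : Ω → ℝ} (hf : AEStronglyMeasurable f μ) {C : ℝ}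
    (h : ∀ᵐ ω ∂μ, |f ω| ≤ C) : Integrable f μ :=
  Integrable.mono' (integrable_const C) hf (by simpa [Real.norm_eq_abs] using h)

end Prob3

section Prob4
variable {Ω : Type*} [MeasurableSpace Ω] {μ : Measure Ω} [IsProbabilityMeasure μ]
  {I : Fin 3 → ℕ → Ω → ℝ} {i j : ℕ}
  (hmeas : ∀ a k, Measurable (I a k))
  (hindep : iIndepFun
      (fun (p : Fin 3 × ℕ) ω => I p.1 p.2 ω) μ)
  (hrad : ∀ a k, μ {ω | I a k ω = 1} = 1 / 2 ∧ μ {ω | I a k ω = -1} = 1 / 2)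

include hmeas hrad in
lemma integrable_II (a b : Fin 3) (k l : ℕ) :
    Integrable (fun ω => I a k ω * I b l ω) μ := by
  refine integrable_of_ae_bound (((hmeas a k).mul (hmeas b l)).aestronglyMeasurable) (C := 1) ?_
  filter_upwards [ae_pm_one hrad hmeas a k, ae_pm_one hrad hmeas b l] with ω h1 h2
  rcases h1 with h1|h1 <;> rcases h2 with h2|h2 <;> rw [h1, h2] <;> norm_num

include hmeas hrad in
lemma integral_X (n : ℕ) : ∫ ω, (I 1 n ω - I 0 n ω) ∂μ = 0 := by
  rw [integral_sub (integrable_I hrad hmeas 1 n) (integrable_I hrad hmeas 0 n),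
    integral_I hrad hmeas, integral_I hrad hmeas, sub_zero]

include hmeas hrad in
lemma integral_Y (n : ℕ) : ∫ ω, (I 2 n ω - I 1 n ω) ∂μ = 0 := by
  rw [integral_sub (integrable_I hrad hmeas 2 n) (integrable_I hrad hmeas 1 n),
    integral_I hrad hmeas, integral_I hrad hmeas, sub_zero]

include hmeas hrad in
lemma integral_W (n : ℕ) : ∫ ω, (I 2 n ω - I 0 n ω) ∂μ = 0 := by
  rw [integral_sub (integrable_I hrad hmeas 2 n) (integrable_I hrad hmeas 0 n),
    integral_I hrad hmeas, integral_I hrad hmeas, sub_zero]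

include hmeas hrad hindep in
lemma integral_XY (n : ℕ) :
    ∫ ω, (I 1 n ω - I 0 n ω) * (I 2 n ω - I 1 n ω) ∂μ = -1 := by
  have heq : (fun ω => (I 1 n ω - I 0 n ω) * (I 2 n ω - I 1 n ω)) =ᵐ[μ]
      (fun ω => I 1 n ω * I 2 n ω - 1 - I 0 n ω * I 2 n ω + I 0 n ω * I 1 n ω) := by
    filter_upwards [ae_pm_one hrad hmeas 1 n] with ω h1
    have hsq : I 1 n ω * I 1 n ω = 1 := by rcases h1 with h|h <;> rw [h] <;> norm_num
    nlinarith [hsq]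
  rw [integral_congr_ae heq]
  have i12 := integrable_II hmeas hrad 1 2 n n
  have i02 := integrable_II hmeas hrad 0 2 n n
  have i01 := integrable_II hmeas hrad 0 1 n n
  have h4 : ∫ ω, (I 1 n ω * I 2 n ω - 1 - I 0 n ω * I 2 n ω + I 0 n ω * I 1 n ω) ∂μ
      = (∫ ω, (I 1 n ω * I 2 n ω - 1 - I 0 n ω * I 2 n ω) ∂μ) + ∫ ω, I 0 n ω * I 1 n ω ∂μ :=
    integral_add ((i12.sub (integrable_const 1)).sub i02) i01
  have h3 : ∫ ω, (I 1 n ω * I 2 n ω - 1 - I 0 n ω * I 2 n ω) ∂μ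
      = (∫ ω, (I 1 n ω * I 2 n ω - 1) ∂μ) - ∫ ω, I 0 n ω * I 2 n ω ∂μ :=
    integral_sub (i12.sub (integrable_const 1)) i02
  have h2 : ∫ ω, (I 1 n ω * I 2 n ω - 1) ∂μ
      = (∫ ω, I 1 n ω * I 2 n ω ∂μ) - ∫ _ω, (1:ℝ) ∂μ :=
    integral_sub i12 (integrable_const 1)
  rw [h4, h3, h2, integral_I_mul_I hrad hmeas hindep (by decide) n,
    integral_I_mul_I hrad hmeas hindep (by decide) n,
    integral_I_mul_I hrad hmeas hindep (by decide) n]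
  simp

include hmeas hrad hindep in
lemma integral_Wsq (n : ℕ) :
    ∫ ω, (I 2 n ω - I 0 n ω)^2 ∂μ = 2 := by
  have heq : (fun ω => (I 2 n ω - I 0 n ω)^2) =ᵐ[μ]
      (fun ω => 2 - 2 * (I 0 n ω * I 2 n ω)) := by
    filter_upwards [ae_pm_one hrad hmeas 0 n, ae_pm_one hrad hmeas 2 n] with ω h0 h2
    have hs0 : I 0 n ω * I 0 n ω = 1 := by rcases h0 with h|h <;> rw [h] <;> norm_num
    have hs2 : I 2 n ω * I 2 n ω = 1 := by rcases h2 with h|h <;> rw [h] <;> norm_num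
    nlinarith [hs0, hs2]
  rw [integral_congr_ae heq]
  have h2 : ∫ ω, ((2:ℝ) - 2 * (I 0 n ω * I 2 n ω)) ∂μ
      = (∫ _ω, (2:ℝ) ∂μ) - ∫ ω, 2 * (I 0 n ω * I 2 n ω) ∂μ :=
    integral_sub (integrable_const 2) ((integrable_II hmeas hrad 0 2 n n).const_mul 2)
  rw [h2, integral_const_mul, integral_I_mul_I hrad hmeas hindep (by decide) n]
  simp

end Prob4

section Prob5
variable {Ω : Type*} [MeasurableSpace Ω] {μ : Measure Ω} [IsProbabilityMeasure μ]
  {I : Fin 3 → ℕ → Ω → ℝ} {i j : ℕ}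
  (hmeas : ∀ a k, Measurable (I a k))
  (hindep : iIndepFun
      (fun (p : Fin 3 × ℕ) ω => I p.1 p.2 ω) μ)
  (hrad : ∀ a k, μ {ω | I a k ω = 1} = 1 / 2 ∧ μ {ω | I a k ω = -1} = 1 / 2)

def fX : (ℝ × ℝ) × ℝ → ℝ := fun t => t.1.2 - t.1.1
def fY : (ℝ × ℝ) × ℝ → ℝ := fun t => t.2 - t.1.2
def fXY : (ℝ × ℝ) × ℝ → ℝ := fun t => (t.1.2 - t.1.1) * (t.2 - t.1.2)
def fW : (ℝ × ℝ) × ℝ → ℝ := fun t => t.2 - t.1.1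
def fWsq : (ℝ × ℝ) × ℝ → ℝ := fun t => (t.2 - t.1.1)^2

lemma measurable_fX : Measurable fX := by unfold fX; fun_prop
lemma measurable_fY : Measurable fY := by unfold fY; fun_prop
lemma measurable_fXY : Measurable fXY := by unfold fXY; fun_prop
lemma measurable_fW : Measurable fW := by unfold fW; fun_prop
lemma measurable_fWsq : Measurable fWsq := by unfold fWsq; fun_prop

include hmeas in
lemma integral_indE (n : ℕ) :
    ∫ ω, indE i j I n ω ∂μ = (μ (eSet i j I n)).toReal := by
  unfold indE
  rw [integral_indicator_const _ (measurableSet_eSet hmeas n)]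
  simp [measureReal_def]

lemma eSet_zero : ∀ ω : Ω, ω ∈ eSet i j I 0 := by
  intro ω
  show (0 : ℕ∞) < collisionTime i j (I 0) (I 1) (I 2) ω
  have := (lt_ct_iff i j (I 0) (I 1) (I 2) ω 0).mpr (fun m h1 h2 => absurd (le_trans h1 h2) (by omega))
  exact_mod_cast this

include hmeas in
lemma F_zero : ∫ ω, indE i j I 0 ω * PP i j I 0 ω ∂μ = (2*i) * (2*j) := by
  have : ∀ ω, indE i j I 0 ω * PP i j I 0 ω = (2*i) * (2*j) := by
    intro ω
    rw [indE, Set.indicator_of_mem (eSet_zero ω), PP, distLM_zero, distMR_zero]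
    ring
  rw [integral_congr_ae (ae_of_all _ this), integral_const]
  simp

include hmeas hrad in
lemma integrable_indPP (n : ℕ) :
    Integrable (fun ω => indE i j I n ω * PP i j I n ω) μ := by
  refine integrable_of_ae_bound
    (((measurable_indE hmeas n).mul
      ((measurable_distLM hmeas n).mul (measurable_distMR hmeas n))).aestronglyMeasurable)
    (C := (2*i+2*n) * (2*j+2*n)) ?_
  filter_upwards [ae_good hrad hmeas] with ω hg
  rw [abs_mul, PP, abs_mul]
  have h1 : |indE i j I n ω| ≤ 1 := by
    rw [abs_of_nonneg (indE_nonneg n ω)]; exact indE_le_one n ω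
  have h2 := abs_distLM_le (i := i) hg n
  have h3 := abs_distMR_le (j := j) hg n
  have e1 : (0:ℝ) ≤ 2*i+2*n := by positivity
  calc |indE i j I n ω| * (|distLM i (I 0) (I 1) n ω| * |distMR j (I 1) (I 2) n ω|)
      ≤ 1 * ((2*i+2*n) * (2*j+2*n)) := by
        refine mul_le_mul h1 (mul_le_mul h2 h3 (abs_nonneg _) e1) (by positivity) zero_le_one
    _ = (2*i+2*n) * (2*j+2*n) := one_mul _

include hmeas hindep hrad in
lemma F_succ (n : ℕ) :
    ∫ ω, indE i j I (n+1) ω * PP i j I (n+1) ω ∂μ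
      = (∫ ω, indE i j I n ω * PP i j I n ω ∂μ) - (μ (eSet i j I n)).toReal := by
  classical
  -- step 1 : replace the indicator at n+1 by the indicator at n
  have step1 : ∀ ω, indE i j I (n+1) ω * PP i j I (n+1) ω
      = indE i j I n ω * PP i j I (n+1) ω := by
    intro ω
    by_cases h1 : ω ∈ eSet i j I (n+1)
    · have h2 : ω ∈ eSet i j I n := by
        have : ((n:ℕ) : ℕ∞) < ((n+1:ℕ) : ℕ∞) := by exact_mod_cast Nat.lt_succ_self n
        exact lt_trans this h1
      rw [indE, indE, Set.indicator_of_mem h1, Set.indicator_of_mem h2]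
    · by_cases h2 : ω ∈ eSet i j I n
      · have hle : collisionTime i j (I 0) (I 1) (I 2) ω ≤ ((n+1:ℕ) : ℕ∞) := not_lt.mp h1
        have hgt : ((n:ℕ) : ℕ∞) < collisionTime i j (I 0) (I 1) (I 2) ω := h2
        have hne : collisionTime i j (I 0) (I 1) (I 2) ω ≠ ⊤ := by
          intro h; rw [h] at hle
          exact absurd hle (not_le.mpr (ENat.coe_lt_top _))
        set c := collisionTime i j (I 0) (I 1) (I 2) ω with hc
        lift c to ℕ using hne with m hm
        have hm1 : m ≤ n + 1 := by exact_mod_cast hle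
        have hm2 : n < m := by exact_mod_cast hgt
        have : m = n + 1 := by omega
        subst this
        have hP := (ct_attained i j (I 0) (I 1) (I 2) ω hc.symm).2
        rw [indE, indE, Set.indicator_of_notMem h1, Set.indicator_of_mem h2,
          PP_eq_prodD, hP]
        ring
      · have h1' : ω ∉ eSet i j I (n+1) := h1
        rw [indE, indE, Set.indicator_of_notMem h1, Set.indicator_of_notMem h2]
  rw [integral_congr_ae (ae_of_all _ step1)]
  -- step 2 : expand the product
  have step2 : ∀ ω, indE i j I n ω * PP i j I (n+1) ω
      = indE i j I n ω * PP i j I n ω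
        + (indE i j I n ω * distLM i (I 0) (I 1) n ω) * (I 2 n ω - I 1 n ω)
        + (indE i j I n ω * distMR j (I 1) (I 2) n ω) * (I 1 n ω - I 0 n ω)
        + indE i j I n ω * ((I 1 n ω - I 0 n ω) * (I 2 n ω - I 1 n ω)) := by
    intro ω
    rw [PP, PP, distLM_succ, distMR_succ]
    ring
  rw [integral_congr_ae (ae_of_all _ step2)]
  -- integrability of all four summands
  have mind := measurable_indE (i := i) (j := j) hmeas n
  have mA := measurable_distLM (i := i) hmeas n
  have mB := measurable_distMR (j := j) hmeas n
  have int1 := integrable_indPP hmeas hrad (i := i) (j := j) n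
  have habs1 : ∀ ω, |indE i j I n ω| ≤ 1 := fun ω => by
    rw [abs_of_nonneg (indE_nonneg n ω)]; exact indE_le_one n ω
  have int2 : Integrable (fun ω =>
      (indE i j I n ω * distLM i (I 0) (I 1) n ω) * (I 2 n ω - I 1 n ω)) μ := by
    refine integrable_of_ae_bound
      (((mind.mul mA).mul ((hmeas 2 n).sub (hmeas 1 n))).aestronglyMeasurable)
      (C := (2*i+2*n) * 2) ?_
    filter_upwards [ae_good hrad hmeas] with ω hg
    rw [abs_mul, abs_mul]
    have h2 := abs_distLM_le (i := i) hg n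
    have h3 : |I 2 n ω - I 1 n ω| ≤ 2 := by
      rcases hg 2 n with ha|ha <;> rcases hg 1 n with hb|hb <;> rw [ha, hb] <;> norm_num
    calc |indE i j I n ω| * |distLM i (I 0) (I 1) n ω| * |I 2 n ω - I 1 n ω|
        ≤ 1 * (2*i+2*n) * 2 := by
          refine mul_le_mul (mul_le_mul (habs1 ω) h2 (abs_nonneg _) zero_le_one) h3
            (abs_nonneg _) (by positivity)
      _ = (2*i+2*n) * 2 := by ring
  have int3 : Integrable (fun ω =>
      (indE i j I n ω * distMR j (I 1) (I 2) n ω) * (I 1 n ω - I 0 n ω)) μ := by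
    refine integrable_of_ae_bound
      (((mind.mul mB).mul ((hmeas 1 n).sub (hmeas 0 n))).aestronglyMeasurable)
      (C := (2*j+2*n) * 2) ?_
    filter_upwards [ae_good hrad hmeas] with ω hg
    rw [abs_mul, abs_mul]
    have h2 := abs_distMR_le (j := j) hg n
    have h3 : |I 1 n ω - I 0 n ω| ≤ 2 := by
      rcases hg 1 n with ha|ha <;> rcases hg 0 n with hb|hb <;> rw [ha, hb] <;> norm_num
    calc |indE i j I n ω| * |distMR j (I 1) (I 2) n ω| * |I 1 n ω - I 0 n ω|
        ≤ 1 * (2*j+2*n) * 2 := by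
          refine mul_le_mul (mul_le_mul (habs1 ω) h2 (abs_nonneg _) zero_le_one) h3
            (abs_nonneg _) (by positivity)
      _ = (2*j+2*n) * 2 := by ring
  have int4 : Integrable (fun ω =>
      indE i j I n ω * ((I 1 n ω - I 0 n ω) * (I 2 n ω - I 1 n ω))) μ := by
    refine integrable_of_ae_bound
      ((mind.mul (((hmeas 1 n).sub (hmeas 0 n)).mul
        ((hmeas 2 n).sub (hmeas 1 n)))).aestronglyMeasurable) (C := 4) ?_
    filter_upwards [ae_good hrad hmeas] with ω hg
    rw [abs_mul, abs_mul]
    have h3 : |I 1 n ω - I 0 n ω| ≤ 2 := by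
      rcases hg 1 n with ha|ha <;> rcases hg 0 n with hb|hb <;> rw [ha, hb] <;> norm_num
    have h4 : |I 2 n ω - I 1 n ω| ≤ 2 := by
      rcases hg 2 n with ha|ha <;> rcases hg 1 n with hb|hb <;> rw [ha, hb] <;> norm_num
    calc |indE i j I n ω| * (|I 1 n ω - I 0 n ω| * |I 2 n ω - I 1 n ω|)
        ≤ 1 * (2 * 2) := by
          refine mul_le_mul (habs1 ω) (mul_le_mul h3 h4 (abs_nonneg _) (by norm_num))
            (by positivity) zero_le_one
      _ = 4 := by norm_num
  -- split the integral
  have hsplit : ∫ ω, (indE i j I n ω * PP i j I n ω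
        + (indE i j I n ω * distLM i (I 0) (I 1) n ω) * (I 2 n ω - I 1 n ω)
        + (indE i j I n ω * distMR j (I 1) (I 2) n ω) * (I 1 n ω - I 0 n ω)
        + indE i j I n ω * ((I 1 n ω - I 0 n ω) * (I 2 n ω - I 1 n ω))) ∂μ
      = (∫ ω, indE i j I n ω * PP i j I n ω ∂μ)
        + (∫ ω, (indE i j I n ω * distLM i (I 0) (I 1) n ω) * (I 2 n ω - I 1 n ω) ∂μ)
        + (∫ ω, (indE i j I n ω * distMR j (I 1) (I 2) n ω) * (I 1 n ω - I 0 n ω) ∂μ)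
        + ∫ ω, indE i j I n ω * ((I 1 n ω - I 0 n ω) * (I 2 n ω - I 1 n ω)) ∂μ := by
    have e3 : ∫ ω, ((indE i j I n ω * PP i j I n ω
          + (indE i j I n ω * distLM i (I 0) (I 1) n ω) * (I 2 n ω - I 1 n ω)
          + (indE i j I n ω * distMR j (I 1) (I 2) n ω) * (I 1 n ω - I 0 n ω))
          + indE i j I n ω * ((I 1 n ω - I 0 n ω) * (I 2 n ω - I 1 n ω))) ∂μ
        = (∫ ω, (indE i j I n ω * PP i j I n ω
          + (indE i j I n ω * distLM i (I 0) (I 1) n ω) * (I 2 n ω - I 1 n ω)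
          + (indE i j I n ω * distMR j (I 1) (I 2) n ω) * (I 1 n ω - I 0 n ω)) ∂μ)
          + ∫ ω, indE i j I n ω * ((I 1 n ω - I 0 n ω) * (I 2 n ω - I 1 n ω)) ∂μ :=
      integral_add ((int1.add int2).add int3) int4
    have e2 : ∫ ω, ((indE i j I n ω * PP i j I n ω
          + (indE i j I n ω * distLM i (I 0) (I 1) n ω) * (I 2 n ω - I 1 n ω))
          + (indE i j I n ω * distMR j (I 1) (I 2) n ω) * (I 1 n ω - I 0 n ω)) ∂μ
        = (∫ ω, (indE i j I n ω * PP i j I n ω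
          + (indE i j I n ω * distLM i (I 0) (I 1) n ω) * (I 2 n ω - I 1 n ω)) ∂μ)
          + ∫ ω, (indE i j I n ω * distMR j (I 1) (I 2) n ω) * (I 1 n ω - I 0 n ω) ∂μ :=
      integral_add (int1.add int2) int3
    have e1 : ∫ ω, (indE i j I n ω * PP i j I n ω
          + (indE i j I n ω * distLM i (I 0) (I 1) n ω) * (I 2 n ω - I 1 n ω)) ∂μ
        = (∫ ω, indE i j I n ω * PP i j I n ω ∂μ)
          + ∫ ω, (indE i j I n ω * distLM i (I 0) (I 1) n ω) * (I 2 n ω - I 1 n ω) ∂μ :=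
      integral_add int1 int2
    rw [e3, e2, e1]
  rw [hsplit]
  -- evaluate the three cross terms
  have term2 : ∫ ω, (indE i j I n ω * distLM i (I 0) (I 1) n ω) * (I 2 n ω - I 1 n ω) ∂μ
      = 0 := by
    have hrew : (fun ω => (indE i j I n ω * distLM i (I 0) (I 1) n ω) * (I 2 n ω - I 1 n ω))
        = fun ω => (fun v => (evSet i j n).indicator (fun _ => (1:ℝ)) v * dLM i n v)
            (phiMap I n ω) * fY (tripleMap I n ω) := by
      funext ω
      simp only
      rw [indE_comp_phi le_rfl, dLM_phi le_rfl]
      rfl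
    rw [hrew, integral_past_mul_step hmeas hindep n
      (g := fun v => (evSet i j n).indicator (fun _ => (1:ℝ)) v * dLM i n v)
      ((measurable_const.indicator measurableSet_evSet).mul measurable_dLM) measurable_fY]
    have : ∫ ω, fY (tripleMap I n ω) ∂μ = 0 := integral_Y hmeas hrad n
    rw [this, mul_zero]
  have term3 : ∫ ω, (indE i j I n ω * distMR j (I 1) (I 2) n ω) * (I 1 n ω - I 0 n ω) ∂μ
      = 0 := by
    have hrew : (fun ω => (indE i j I n ω * distMR j (I 1) (I 2) n ω) * (I 1 n ω - I 0 n ω))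
        = fun ω => (fun v => (evSet i j n).indicator (fun _ => (1:ℝ)) v * dMR j n v)
            (phiMap I n ω) * fX (tripleMap I n ω) := by
      funext ω
      simp only
      rw [indE_comp_phi le_rfl, dMR_phi le_rfl]
      rfl
    rw [hrew, integral_past_mul_step hmeas hindep n
      (g := fun v => (evSet i j n).indicator (fun _ => (1:ℝ)) v * dMR j n v)
      ((measurable_const.indicator measurableSet_evSet).mul measurable_dMR) measurable_fX]
    have : ∫ ω, fX (tripleMap I n ω) ∂μ = 0 := integral_X hmeas hrad n
    rw [this, mul_zero]
  have term4 : ∫ ω, indE i j I n ω * ((I 1 n ω - I 0 n ω) * (I 2 n ω - I 1 n ω)) ∂μ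
      = -(μ (eSet i j I n)).toReal := by
    have hrew : (fun ω => indE i j I n ω * ((I 1 n ω - I 0 n ω) * (I 2 n ω - I 1 n ω)))
        = fun ω => (fun v => (evSet i j n).indicator (fun _ => (1:ℝ)) v)
            (phiMap I n ω) * fXY (tripleMap I n ω) := by
      funext ω
      simp only
      rw [indE_comp_phi le_rfl]
      rfl
    rw [hrew, integral_past_mul_step hmeas hindep n
      (measurable_const.indicator measurableSet_evSet) measurable_fXY]
    have h1 : ∫ ω, fXY (tripleMap I n ω) ∂μ = -1 := integral_XY hmeas hindep hrad n
    have h2 : ∫ ω, (fun v => (evSet i j n).indicator (fun _ => (1:ℝ)) v) (phiMap I n ω) ∂μ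
        = (μ (eSet i j I n)).toReal := by
      have : (fun ω => (fun v => (evSet i j n).indicator (fun _ => (1:ℝ)) v) (phiMap I n ω))
          = indE i j I n := by
        funext ω; exact indE_comp_phi le_rfl ω
      rw [this, integral_indE hmeas]
    rw [h1, h2]
    ring
  rw [term2, term3, term4]
  ring

end Prob5

section Prob6
variable {Ω : Type*} [MeasurableSpace Ω] {μ : Measure Ω} [IsProbabilityMeasure μ]
  {I : Fin 3 → ℕ → Ω → ℝ} {i j : ℕ}
  (hmeas : ∀ a k, Measurable (I a k))
  (hindep : iIndepFun
      (fun (p : Fin 3 × ℕ) ω => I p.1 p.2 ω) μ)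
  (hrad : ∀ a k, μ {ω | I a k ω = 1} = 1 / 2 ∧ μ {ω | I a k ω = -1} = 1 / 2)

include hmeas hindep hrad in
lemma F_formula (n : ℕ) :
    ∫ ω, indE i j I n ω * PP i j I n ω ∂μ
      = (2*i) * (2*j) - ∑ m ∈ Finset.range n, (μ (eSet i j I m)).toReal := by
  induction n with
  | zero => simp [F_zero hmeas]
  | succ n ih =>
    rw [F_succ hmeas hindep hrad n, ih, Finset.sum_range_succ]
    ring

include hmeas hrad in
lemma F_nonneg (hi : 1 ≤ i) (hj : 1 ≤ j) (n : ℕ) :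
    0 ≤ ∫ ω, indE i j I n ω * PP i j I n ω ∂μ := by
  refine integral_nonneg_of_ae ?_
  filter_upwards [ae_good hrad hmeas] with ω hg
  simp only [Pi.zero_apply]
  by_cases h : ω ∈ eSet i j I n
  · have hpos := dist_pos_of_lt_ct hi hj (fun k => hg 0 k) (fun k => hg 1 k) (fun k => hg 2 k) h
    rw [indE, Set.indicator_of_mem h, PP]
    nlinarith [hpos.1, hpos.2]
  · rw [indE, Set.indicator_of_notMem h, zero_mul]

include hmeas hindep hrad in
lemma p_partial_le (hi : 1 ≤ i) (hj : 1 ≤ j) (n : ℕ) :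
    ∑ m ∈ Finset.range n, (μ (eSet i j I m)).toReal ≤ (2*i) * (2*j) := by
  have := F_nonneg hmeas hrad hi hj (i := i) (j := j) n
  rw [F_formula hmeas hindep hrad n] at this
  linarith

include hmeas hindep hrad in
lemma p_summable (hi : 1 ≤ i) (hj : 1 ≤ j) :
    Summable (fun m => (μ (eSet i j I m)).toReal) := by
  apply summable_of_sum_range_le (fun m => ENNReal.toReal_nonneg)
  exact p_partial_le hmeas hindep hrad hi hj

include hmeas hindep hrad in
lemma tau_ae_finite (hi : 1 ≤ i) (hj : 1 ≤ j) :
    ∀ᵐ ω ∂μ, collisionTime i j (I 0) (I 1) (I 2) ω ≠ ⊤ := by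
  have hsub : ∀ n, {ω | collisionTime i j (I 0) (I 1) (I 2) ω = ⊤} ⊆ eSet i j I n := by
    intro n ω hω
    show (n : ℕ∞) < collisionTime i j (I 0) (I 1) (I 2) ω
    rw [Set.mem_setOf_eq] at hω
    rw [hω]; exact ENat.coe_lt_top n
  have htend : Filter.Tendsto (fun m => (μ (eSet i j I m)).toReal) Filter.atTop (nhds 0) :=
    (p_summable hmeas hindep hrad hi hj).tendsto_atTop_zero
  have hle : ∀ n, (μ {ω | collisionTime i j (I 0) (I 1) (I 2) ω = ⊤}).toReal
      ≤ (μ (eSet i j I n)).toReal := by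
    intro n
    exact ENNReal.toReal_mono (measure_ne_top _ _) (measure_mono (hsub n))
  have h0 : (μ {ω | collisionTime i j (I 0) (I 1) (I 2) ω = ⊤}).toReal = 0 := by
    have hge := ge_of_tendsto' htend hle
    have h2 : (0:ℝ) ≤ (μ {ω | collisionTime i j (I 0) (I 1) (I 2) ω = ⊤}).toReal :=
      ENNReal.toReal_nonneg
    linarith
  have hmeas' : μ {ω | collisionTime i j (I 0) (I 1) (I 2) ω = ⊤} = 0 := by
    have := (ENNReal.toReal_eq_zero_iff _).mp h0
    rcases this with h | h
    · exact h
    · exact absurd h (measure_ne_top _ _)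
  rw [MeasureTheory.ae_iff]
  simpa using hmeas'

end Prob6

section Prob7
variable {Ω : Type*} [MeasurableSpace Ω] {μ : Measure Ω} [IsProbabilityMeasure μ]
  {I : Fin 3 → ℕ → Ω → ℝ} {i j : ℕ}
  (hmeas : ∀ a k, Measurable (I a k))
  (hindep : iIndepFun
      (fun (p : Fin 3 × ℕ) ω => I p.1 p.2 ω) μ)
  (hrad : ∀ a k, μ {ω | I a k ω = 1} = 1 / 2 ∧ μ {ω | I a k ω = -1} = 1 / 2)

/-- the stopped L-R distance -/
noncomputable def ZZ (i j : ℕ) (I : Fin 3 → ℕ → Ω → ℝ) (n : ℕ) (ω : Ω) : ℝ :=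
  distLM i (I 0) (I 1) (stoppedIdx i j (I 0) (I 1) (I 2) n ω) ω
    + distMR j (I 1) (I 2) (stoppedIdx i j (I 0) (I 1) (I 2) n ω) ω

lemma enat_succ_le {n : ℕ} {c : ℕ∞} (h : (n : ℕ∞) < c) : ((n+1 : ℕ) : ℕ∞) ≤ c := by
  induction c using ENat.recTopCoe with
  | top => exact le_top
  | coe m => exact_mod_cast Nat.cast_lt.mp h

lemma ZZ_succ (n : ℕ) (ω : Ω) :
    ZZ i j I (n+1) ω = ZZ i j I n ω + indE i j I n ω * (I 2 n ω - I 0 n ω) := by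
  by_cases h : ω ∈ eSet i j I n
  · have hlt : (n : ℕ∞) < collisionTime i j (I 0) (I 1) (I 2) ω := h
    have h1 : stoppedIdx i j (I 0) (I 1) (I 2) n ω = n := si_of_le _ _ _ _ _ _ hlt.le
    have h2 : stoppedIdx i j (I 0) (I 1) (I 2) (n+1) ω = n+1 :=
      si_of_le _ _ _ _ _ _ (enat_succ_le hlt)
    rw [ZZ, ZZ, h1, h2, indE, Set.indicator_of_mem h, distLM_succ, distMR_succ]
    ring
  · have hle : collisionTime i j (I 0) (I 1) (I 2) ω ≤ (n : ℕ∞) := not_lt.mp h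
    have h1 := si_of_ge i j (I 0) (I 1) (I 2) ω hle
    have h2 := si_of_ge i j (I 0) (I 1) (I 2) ω
      (le_trans hle (by exact_mod_cast Nat.le_succ n))
    rw [ZZ, ZZ, h1, h2, indE, Set.indicator_of_notMem h]
    ring

lemma ZZ_zero (ω : Ω) : ZZ i j I 0 ω = 2*i + 2*j := by
  have h1 : stoppedIdx i j (I 0) (I 1) (I 2) 0 ω = 0 := by
    simp [stoppedIdx]
  rw [ZZ, h1, distLM_zero, distMR_zero]

lemma ZZ_closed (n : ℕ) (ω : Ω) :
    ZZ i j I n ω = (2*i + 2*j)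
      + ∑ k ∈ Finset.range n, indE i j I k ω * (I 2 k ω - I 0 k ω) := by
  induction n with
  | zero => simp [ZZ_zero]
  | succ n ih => rw [ZZ_succ, ih, Finset.sum_range_succ]; ring

lemma ZZ_diff {n m : ℕ} (h : n ≤ m) (ω : Ω) :
    ZZ i j I m ω - ZZ i j I n ω
      = ∑ k ∈ Finset.Ico n m, indE i j I k ω * (I 2 k ω - I 0 k ω) := by
  rw [ZZ_closed m, ZZ_closed n, Finset.sum_Ico_eq_sub _ h]
  ring

include hmeas in
lemma measurable_ZZ (n : ℕ) : Measurable (ZZ i j I n (Ω := Ω)) := by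
  have : ZZ i j I n (Ω := Ω) = fun ω => (2*(i:ℝ) + 2*j)
      + ∑ k ∈ Finset.range n, indE i j I k ω * (I 2 k ω - I 0 k ω) := by
    funext ω; exact ZZ_closed n ω
  rw [this]
  refine measurable_const.add (Finset.measurable_sum _ fun k _ => ?_)
  exact (measurable_indE hmeas k).mul ((hmeas 2 k).sub (hmeas 0 k))

include hrad hmeas in
lemma abs_gW_le (k : ℕ) : ∀ᵐ ω ∂μ, |indE i j I k ω * (I 2 k ω - I 0 k ω)| ≤ 2 := by
  filter_upwards [ae_good hrad hmeas] with ω hg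
  rw [abs_mul]
  have h1 : |indE i j I k ω| ≤ 1 := by
    rw [abs_of_nonneg (indE_nonneg k ω)]; exact indE_le_one k ω
  have h2 : |I 2 k ω - I 0 k ω| ≤ 2 := by
    rcases hg 2 k with ha|ha <;> rcases hg 0 k with hb|hb <;> rw [ha, hb] <;> norm_num
  calc |indE i j I k ω| * |I 2 k ω - I 0 k ω| ≤ 1 * 2 :=
        mul_le_mul h1 h2 (abs_nonneg _) zero_le_one
    _ = 2 := one_mul 2

lemma phi_coord {a : Fin 3} {k n : ℕ} (h : k < n) (ω : Ω) :
    phiMap I n ω (a, k) = I a k ω := by simp [phiMap, h]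

include hmeas hindep hrad in
lemma integral_gW_cross {k l : ℕ} (hkl : k < l) :
    ∫ ω, (indE i j I k ω * (I 2 k ω - I 0 k ω))
        * (indE i j I l ω * (I 2 l ω - I 0 l ω)) ∂μ = 0 := by
  have hrew : (fun ω => (indE i j I k ω * (I 2 k ω - I 0 k ω))
        * (indE i j I l ω * (I 2 l ω - I 0 l ω)))
      = fun ω => (fun v => (evSet i j k).indicator (fun _ => (1:ℝ)) v
          * (v (2, k) - v (0, k)) * (evSet i j l).indicator (fun _ => (1:ℝ)) v)
          (phiMap I l ω) * fW (tripleMap I l ω) := by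
    funext ω
    simp only
    rw [indE_comp_phi hkl.le, indE_comp_phi le_rfl, phi_coord hkl, phi_coord hkl]
    show _ = _ * (I 2 l ω - I 0 l ω)
    ring
  rw [hrew, integral_past_mul_step hmeas hindep l
    (g := fun v => (evSet i j k).indicator (fun _ => (1:ℝ)) v * (v (2, k) - v (0, k)) *
      (evSet i j l).indicator (fun _ => (1:ℝ)) v)
    (((measurable_const.indicator measurableSet_evSet).mul
      ((measurable_pi_apply _).sub (measurable_pi_apply _))).mul
      (measurable_const.indicator measurableSet_evSet)) measurable_fW]
  have : ∫ ω, fW (tripleMap I l ω) ∂μ = 0 := integral_W hmeas hrad l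
  rw [this, mul_zero]

include hmeas hindep hrad in
lemma integral_gW_diag (k : ℕ) :
    ∫ ω, (indE i j I k ω * (I 2 k ω - I 0 k ω))
        * (indE i j I k ω * (I 2 k ω - I 0 k ω)) ∂μ
      = 2 * (μ (eSet i j I k)).toReal := by
  have hsq : ∀ ω : Ω, (indE i j I k ω * (I 2 k ω - I 0 k ω))
        * (indE i j I k ω * (I 2 k ω - I 0 k ω))
      = indE i j I k ω * (I 2 k ω - I 0 k ω)^2 := by
    intro ω
    unfold indE
    by_cases h : ω ∈ eSet i j I k
    · rw [Set.indicator_of_mem h]; ring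
    · rw [Set.indicator_of_notMem h]; ring
  rw [integral_congr_ae (ae_of_all _ hsq)]
  have hrew : (fun ω => indE i j I k ω * (I 2 k ω - I 0 k ω)^2)
      = fun ω => (fun v => (evSet i j k).indicator (fun _ => (1:ℝ)) v)
          (phiMap I k ω) * fWsq (tripleMap I k ω) := by
    funext ω
    simp only
    rw [indE_comp_phi le_rfl]
    rfl
  rw [hrew, integral_past_mul_step hmeas hindep k
    (measurable_const.indicator measurableSet_evSet) measurable_fWsq]
  have h1 : ∫ ω, fWsq (tripleMap I k ω) ∂μ = 2 := integral_Wsq hmeas hindep hrad k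
  have h2 : (fun ω => (fun v => (evSet i j k).indicator (fun _ => (1:ℝ)) v) (phiMap I k ω))
      = indE i j I k := by
    funext ω; exact indE_comp_phi le_rfl ω
  rw [h1, h2, integral_indE hmeas]
  ring

include hmeas hindep hrad in
lemma integral_ZZ_diff_sq {n m : ℕ} (h : n ≤ m) :
    ∫ ω, (ZZ i j I m ω - ZZ i j I n ω)^2 ∂μ
      = 2 * ∑ k ∈ Finset.Ico n m, (μ (eSet i j I k)).toReal := by
  have hg : ∀ k, Measurable (fun ω => indE i j I k ω * (I 2 k ω - I 0 k ω)) :=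
    fun k => (measurable_indE hmeas k).mul ((hmeas 2 k).sub (hmeas 0 k))
  have hint : ∀ k l : ℕ, Integrable (fun ω =>
      (indE i j I k ω * (I 2 k ω - I 0 k ω)) * (indE i j I l ω * (I 2 l ω - I 0 l ω))) μ := by
    intro k l
    refine integrable_of_ae_bound (((hg k).mul (hg l)).aestronglyMeasurable) (C := 4) ?_
    filter_upwards [abs_gW_le hmeas hrad k, abs_gW_le hmeas hrad l] with ω h1 h2
    rw [abs_mul]
    calc _ ≤ (2:ℝ) * 2 := mul_le_mul h1 h2 (abs_nonneg _) (by norm_num)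
      _ = 4 := by norm_num
  have hexp : ∀ ω, (ZZ i j I m ω - ZZ i j I n ω)^2
      = ∑ k ∈ Finset.Ico n m, ∑ l ∈ Finset.Ico n m,
          (indE i j I k ω * (I 2 k ω - I 0 k ω)) * (indE i j I l ω * (I 2 l ω - I 0 l ω)) := by
    intro ω
    rw [ZZ_diff h, sq, Finset.sum_mul_sum]
  rw [integral_congr_ae (ae_of_all _ hexp)]
  rw [integral_finset_sum _ (fun k _ => integrable_finset_sum _ (fun l _ => hint k l))]
  have : ∀ k ∈ Finset.Ico n m,
      (∫ ω, ∑ l ∈ Finset.Ico n m, (indE i j I k ω * (I 2 k ω - I 0 k ω))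
          * (indE i j I l ω * (I 2 l ω - I 0 l ω)) ∂μ)
        = 2 * (μ (eSet i j I k)).toReal := by
    intro k hk
    rw [integral_finset_sum _ (fun l _ => hint k l)]
    have hterm : ∀ l ∈ Finset.Ico n m,
        (∫ ω, (indE i j I k ω * (I 2 k ω - I 0 k ω))
            * (indE i j I l ω * (I 2 l ω - I 0 l ω)) ∂μ)
          = if k = l then 2 * (μ (eSet i j I k)).toReal else 0 := by
      intro l hl
      rcases lt_trichotomy k l with hlt | heq | hgt
      · rw [if_neg hlt.ne]
        exact integral_gW_cross hmeas hindep hrad hlt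
      · subst heq
        rw [if_pos rfl]
        exact integral_gW_diag hmeas hindep hrad k
      · rw [if_neg hgt.ne']
        have := integral_gW_cross hmeas hindep hrad (i := i) (j := j) hgt
        rw [← this]
        congr 1
        funext ω
        ring
    rw [Finset.sum_congr rfl hterm, Finset.sum_ite_eq (Finset.Ico n m) k
      (fun _ => 2 * (μ (eSet i j I k)).toReal), if_pos hk]
  rw [Finset.sum_congr rfl this, Finset.mul_sum]

end Prob7

section Prob8
variable {Ω : Type*} [MeasurableSpace Ω] {μ : Measure Ω} [IsProbabilityMeasure μ]
  {I : Fin 3 → ℕ → Ω → ℝ} {i j : ℕ}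
  (hmeas : ∀ a k, Measurable (I a k))
  (hindep : iIndepFun
      (fun (p : Fin 3 × ℕ) ω => I p.1 p.2 ω) μ)
  (hrad : ∀ a k, μ {ω | I a k ω = 1} = 1 / 2 ∧ μ {ω | I a k ω = -1} = 1 / 2)

include hmeas in
lemma measurable_tauNat :
    Measurable (fun ω : Ω => (collisionTime i j (I 0) (I 1) (I 2) ω).toNat) := by
  apply measurable_to_countable'
  intro m
  by_cases hm : m = 0
  · subst hm
    have : (fun ω : Ω => (collisionTime i j (I 0) (I 1) (I 2) ω).toNat) ⁻¹' {0}
        = (eSet i j I 0)ᶜ ∪ ⋂ n, eSet i j I n := by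
      ext ω
      simp only [Set.mem_preimage, Set.mem_singleton_iff, Set.mem_union, Set.mem_compl_iff,
        Set.mem_iInter, ENat.toNat_eq_zero]
      constructor
      · rintro (h | h)
        · left
          intro hlt
          rw [eSet, Set.mem_setOf_eq, h] at hlt
          simp at hlt
        · right
          intro n
          rw [eSet, Set.mem_setOf_eq, h]
          exact ENat.coe_lt_top n
      · rintro (h | h)
        · left
          rw [eSet, Set.mem_setOf_eq] at h
          push_neg at h
          exact le_antisymm (by exact_mod_cast h) zero_le
        · right
          by_contra hne
          set c := collisionTime i j (I 0) (I 1) (I 2) ω with hc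
          lift c to ℕ using hne with k hk
          have := h k
          rw [eSet, Set.mem_setOf_eq, ← hc] at this
          exact lt_irrefl _ this
    rw [this]
    exact ((measurableSet_eSet hmeas 0).compl).union
      (MeasurableSet.iInter fun n => measurableSet_eSet hmeas n)
  · have : (fun ω : Ω => (collisionTime i j (I 0) (I 1) (I 2) ω).toNat) ⁻¹' {m}
        = eSet i j I (m-1) ∩ (eSet i j I m)ᶜ := by
      ext ω
      simp only [Set.mem_preimage, Set.mem_singleton_iff, Set.mem_inter_iff, Set.mem_compl_iff]
      rw [ENat.toNat_eq_iff hm, eSet, eSet, Set.mem_setOf_eq, Set.mem_setOf_eq]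
      constructor
      · intro h
        rw [h]
        constructor
        · exact_mod_cast Nat.sub_lt (Nat.pos_of_ne_zero hm) one_pos
        · simp
      · rintro ⟨h1, h2⟩
        push_neg at h2
        have hne : collisionTime i j (I 0) (I 1) (I 2) ω ≠ ⊤ := by
          intro h; rw [h] at h2
          exact absurd h2 (not_le.mpr (ENat.coe_lt_top m))
        set c := collisionTime i j (I 0) (I 1) (I 2) ω with hc
        lift c to ℕ using hne with k hk
        have a1 : m - 1 < k := by exact_mod_cast h1
        have a2 : k ≤ m := by exact_mod_cast h2
        have : k = m := by omega
        exact_mod_cast this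
    rw [this]
    exact (measurableSet_eSet hmeas (m-1)).inter ((measurableSet_eSet hmeas m)).compl

/-- the limiting value of the stopped L-R walk -/
noncomputable def Zinf (i j : ℕ) (I : Fin 3 → ℕ → Ω → ℝ) (ω : Ω) : ℝ :=
  distLM i (I 0) (I 1) ((collisionTime i j (I 0) (I 1) (I 2) ω).toNat) ω
    + distMR j (I 1) (I 2) ((collisionTime i j (I 0) (I 1) (I 2) ω).toNat) ω

lemma measurable_comp_nat {h : ℕ → Ω → ℝ} (hh : ∀ m, Measurable (h m)) {g : Ω → ℕ}
    (hg : Measurable g) : Measurable fun ω => h (g ω) ω := by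
  intro s hs
  have : (fun ω => h (g ω) ω) ⁻¹' s = ⋃ m, (g ⁻¹' {m}) ∩ (h m ⁻¹' s) := by
    ext ω
    simp only [Set.mem_preimage, Set.mem_iUnion, Set.mem_inter_iff, Set.mem_singleton_iff]
    constructor
    · intro hmem; exact ⟨g ω, rfl, hmem⟩
    · rintro ⟨m, hgm, hmem⟩; rwa [← hgm] at hmem
  rw [this]
  exact MeasurableSet.iUnion fun m => (hg (measurableSet_singleton m)).inter (hh m hs)

include hmeas in
lemma measurable_Zinf : Measurable (Zinf i j I (Ω := Ω)) := by
  unfold Zinf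
  exact (measurable_comp_nat (fun m => measurable_distLM hmeas m)
    (measurable_tauNat hmeas)).add
    (measurable_comp_nat (fun m => measurable_distMR hmeas m) (measurable_tauNat hmeas))

lemma ZZ_eventually_eq {ω : Ω} (hfin : collisionTime i j (I 0) (I 1) (I 2) ω ≠ ⊤)
    {n : ℕ} (hn : (collisionTime i j (I 0) (I 1) (I 2) ω).toNat ≤ n) :
    ZZ i j I n ω = Zinf i j I ω := by
  have hle : collisionTime i j (I 0) (I 1) (I 2) ω ≤ (n : ℕ∞) := by
    set c := collisionTime i j (I 0) (I 1) (I 2) ω with hc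
    lift c to ℕ using hfin with k hk
    simp only [ENat.toNat_coe] at hn
    exact_mod_cast hn
  rw [ZZ, Zinf, si_of_ge i j (I 0) (I 1) (I 2) ω hle]

end Prob8

section Prob9
variable {Ω : Type*} [MeasurableSpace Ω] {μ : Measure Ω} [IsProbabilityMeasure μ]
  {I : Fin 3 → ℕ → Ω → ℝ} {i j : ℕ}
  (hmeas : ∀ a k, Measurable (I a k))
  (hindep : iIndepFun
      (fun (p : Fin 3 × ℕ) ω => I p.1 p.2 ω) μ)
  (hrad : ∀ a k, μ {ω | I a k ω = 1} = 1 / 2 ∧ μ {ω | I a k ω = -1} = 1 / 2)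

include hmeas hrad in
lemma abs_ZZ_diff_le {n m : ℕ} (h : n ≤ m) :
    ∀ᵐ ω ∂μ, |ZZ i j I m ω - ZZ i j I n ω| ≤ 2 * (m - n : ℕ) := by
  filter_upwards [ae_good hrad hmeas] with ω hg
  rw [ZZ_diff h]
  calc |∑ k ∈ Finset.Ico n m, indE i j I k ω * (I 2 k ω - I 0 k ω)|
      ≤ ∑ k ∈ Finset.Ico n m, |indE i j I k ω * (I 2 k ω - I 0 k ω)| :=
        Finset.abs_sum_le_sum_abs _ _
    _ ≤ ∑ k ∈ Finset.Ico n m, 2 := by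
        refine Finset.sum_le_sum fun k _ => ?_
        rw [abs_mul]
        have h1 : |indE i j I k ω| ≤ 1 := by
          rw [abs_of_nonneg (indE_nonneg k ω)]; exact indE_le_one k ω
        have h2 : |I 2 k ω - I 0 k ω| ≤ 2 := by
          rcases hg 2 k with ha|ha <;> rcases hg 0 k with hb|hb <;> rw [ha, hb] <;> norm_num
        calc |indE i j I k ω| * |I 2 k ω - I 0 k ω| ≤ 1 * 2 :=
              mul_le_mul h1 h2 (abs_nonneg _) zero_le_one
          _ = 2 := one_mul 2
    _ = 2 * (m - n : ℕ) := by
        rw [Finset.sum_const, Nat.card_Ico]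
        push_cast
        ring

include hmeas hrad in
lemma integrable_ZZ_diff_sq {n m : ℕ} (h : n ≤ m) :
    Integrable (fun ω => (ZZ i j I m ω - ZZ i j I n ω)^2) μ := by
  refine integrable_of_ae_bound
    ((((measurable_ZZ hmeas m).sub (measurable_ZZ hmeas n)).pow_const 2).aestronglyMeasurable)
    (C := (2 * (m - n : ℕ))^2) ?_
  filter_upwards [abs_ZZ_diff_le hmeas hrad h] with ω hω
  rw [abs_of_nonneg (sq_nonneg _), ← sq_abs]
  exact pow_le_pow_left₀ (abs_nonneg _) hω 2

include hmeas hindep hrad in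
lemma fatou_bound (hi : 1 ≤ i) (hj : 1 ≤ j) (n : ℕ) :
    ∫⁻ ω, ENNReal.ofReal ((Zinf i j I ω - ZZ i j I n ω)^2) ∂μ
      ≤ ENNReal.ofReal (2 * ((∑' m, (μ (eSet i j I m)).toReal)
          - ∑ m ∈ Finset.range n, (μ (eSet i j I m)).toReal)) := by
  have hsum : Summable (fun m => (μ (eSet i j I m)).toReal) :=
    p_summable hmeas hindep hrad hi hj
  have hfm : ∀ m, n ≤ m → (∫⁻ ω, ENNReal.ofReal ((ZZ i j I m ω - ZZ i j I n ω)^2) ∂μ)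
      ≤ ENNReal.ofReal (2 * ((∑' m, (μ (eSet i j I m)).toReal)
          - ∑ m ∈ Finset.range n, (μ (eSet i j I m)).toReal)) := by
    intro m hm
    rw [← ofReal_integral_eq_lintegral_ofReal (integrable_ZZ_diff_sq hmeas hrad hm)
      (ae_of_all _ fun ω => sq_nonneg _)]
    apply ENNReal.ofReal_le_ofReal
    rw [integral_ZZ_diff_sq hmeas hindep hrad hm, Finset.sum_Ico_eq_sub _ hm]
    have h1 : ∑ k ∈ Finset.range m, (μ (eSet i j I k)).toReal
        ≤ ∑' m, (μ (eSet i j I m)).toReal :=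
      Summable.sum_le_tsum _ (fun k _ => ENNReal.toReal_nonneg) hsum
    linarith
  have hae : (fun ω => ENNReal.ofReal ((Zinf i j I ω - ZZ i j I n ω)^2))
      =ᵐ[μ] fun ω => Filter.liminf
        (fun m => ENNReal.ofReal ((ZZ i j I m ω - ZZ i j I n ω)^2)) Filter.atTop := by
    filter_upwards [tau_ae_finite hmeas hindep hrad hi hj] with ω hfin
    have htd : Filter.Tendsto (fun m => ENNReal.ofReal ((ZZ i j I m ω - ZZ i j I n ω)^2))
        Filter.atTop (nhds (ENNReal.ofReal ((Zinf i j I ω - ZZ i j I n ω)^2))) := by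
      apply tendsto_atTop_of_eventually_const
        (i₀ := (collisionTime i j (I 0) (I 1) (I 2) ω).toNat)
      intro m hm
      rw [ZZ_eventually_eq hfin hm]
    exact htd.liminf_eq.symm
  calc ∫⁻ ω, ENNReal.ofReal ((Zinf i j I ω - ZZ i j I n ω)^2) ∂μ
      = ∫⁻ ω, Filter.liminf
          (fun m => ENNReal.ofReal ((ZZ i j I m ω - ZZ i j I n ω)^2)) Filter.atTop ∂μ :=
        lintegral_congr_ae hae
    _ ≤ Filter.liminf
          (fun m => ∫⁻ ω, ENNReal.ofReal ((ZZ i j I m ω - ZZ i j I n ω)^2) ∂μ)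
          Filter.atTop := by
        refine lintegral_liminf_le fun m => ?_
        exact (((measurable_ZZ hmeas m).sub (measurable_ZZ hmeas n)).pow_const 2).ennreal_ofReal
    _ ≤ _ := by
        refine Filter.liminf_le_of_frequently_le' ?_
        exact ((Filter.eventually_atTop.mpr ⟨n, hfm⟩)).frequently

include hmeas hrad in
lemma integrable_ZZ_sq (m : ℕ) : Integrable (fun ω => (ZZ i j I m ω)^2) μ := by
  refine integrable_of_ae_bound
    (((measurable_ZZ hmeas m).pow_const 2).aestronglyMeasurable)
    (C := (2*i + 2*j + 2*m)^2) ?_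
  filter_upwards [abs_ZZ_diff_le hmeas hrad (Nat.zero_le m)] with ω hω
  rw [ZZ_zero] at hω
  have habs : |ZZ i j I m ω| ≤ 2*i + 2*j + 2*m := by
    have h1 : |ZZ i j I m ω| - |2*(i:ℝ) + 2*j| ≤ 2 * m := by
      calc |ZZ i j I m ω| - |2*(i:ℝ) + 2*j| ≤ |ZZ i j I m ω - (2*i + 2*j)| :=
            abs_sub_abs_le_abs_sub _ _
        _ ≤ 2 * m := by simpa using hω
    have h2 : |2*(i:ℝ) + 2*j| = 2*i + 2*j := abs_of_nonneg (by positivity)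
    linarith
  rw [abs_of_nonneg (sq_nonneg _), ← sq_abs]
  have : (0:ℝ) ≤ 2*i + 2*j + 2*m := by positivity
  exact pow_le_pow_left₀ (abs_nonneg _) habs 2

include hmeas hindep hrad in
lemma zinf_sq_lintegral_le (hi : 1 ≤ i) (hj : 1 ≤ j) :
    ∫⁻ ω, ENNReal.ofReal ((Zinf i j I ω)^2) ∂μ
      ≤ ENNReal.ofReal (4 * (∑' m, (μ (eSet i j I m)).toReal) + 2*(2*i + 2*j)^2) := by
  have hsum : Summable (fun m => (μ (eSet i j I m)).toReal) :=
    p_summable hmeas hindep hrad hi hj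
  have hfm : ∀ m : ℕ, (∫⁻ ω, ENNReal.ofReal ((ZZ i j I m ω)^2) ∂μ)
      ≤ ENNReal.ofReal (4 * (∑' m, (μ (eSet i j I m)).toReal) + 2*(2*i + 2*j)^2) := by
    intro m
    rw [← ofReal_integral_eq_lintegral_ofReal (integrable_ZZ_sq hmeas hrad m)
      (ae_of_all _ fun ω => sq_nonneg _)]
    apply ENNReal.ofReal_le_ofReal
    have hptw : ∀ ω, (ZZ i j I m ω)^2
        ≤ 2*(ZZ i j I m ω - ZZ i j I 0 ω)^2 + 2*(2*i + 2*j)^2 := by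
      intro ω
      rw [ZZ_zero]
      nlinarith [sq_nonneg (ZZ i j I m ω - 2*(2*(i:ℝ) + 2*j))]
    have hint : Integrable (fun ω => 2*(ZZ i j I m ω - ZZ i j I 0 ω)^2 + 2*(2*(i:ℝ) + 2*j)^2) μ :=
      (((integrable_ZZ_diff_sq hmeas hrad (Nat.zero_le m)).const_mul 2).add
        (integrable_const _))
    calc ∫ ω, (ZZ i j I m ω)^2 ∂μ
        ≤ ∫ ω, (2*(ZZ i j I m ω - ZZ i j I 0 ω)^2 + 2*(2*(i:ℝ) + 2*j)^2) ∂μ :=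
          integral_mono (integrable_ZZ_sq hmeas hrad m) hint hptw
      _ = 2 * (2 * ∑ k ∈ Finset.Ico 0 m, (μ (eSet i j I k)).toReal) + 2*(2*(i:ℝ) + 2*j)^2 := by
          rw [integral_add (((integrable_ZZ_diff_sq hmeas hrad (Nat.zero_le m)).const_mul 2))
            (integrable_const _), integral_const_mul,
            integral_ZZ_diff_sq hmeas hindep hrad (Nat.zero_le m)]
          simp
      _ ≤ 4 * (∑' m, (μ (eSet i j I m)).toReal) + 2*(2*(i:ℝ) + 2*j)^2 := by
          have h1 : ∑ k ∈ Finset.Ico 0 m, (μ (eSet i j I k)).toReal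
              ≤ ∑' m, (μ (eSet i j I m)).toReal := by
            exact Summable.sum_le_tsum _ (fun k _ => ENNReal.toReal_nonneg) hsum
          linarith
  have hae : (fun ω => ENNReal.ofReal ((Zinf i j I ω)^2))
      =ᵐ[μ] fun ω => Filter.liminf
        (fun m => ENNReal.ofReal ((ZZ i j I m ω)^2)) Filter.atTop := by
    filter_upwards [tau_ae_finite hmeas hindep hrad hi hj] with ω hfin
    have htd : Filter.Tendsto (fun m => ENNReal.ofReal ((ZZ i j I m ω)^2))
        Filter.atTop (nhds (ENNReal.ofReal ((Zinf i j I ω)^2))) := by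
      apply tendsto_atTop_of_eventually_const
        (i₀ := (collisionTime i j (I 0) (I 1) (I 2) ω).toNat)
      intro m hm
      rw [ZZ_eventually_eq hfin hm]
    exact htd.liminf_eq.symm
  calc ∫⁻ ω, ENNReal.ofReal ((Zinf i j I ω)^2) ∂μ
      = ∫⁻ ω, Filter.liminf (fun m => ENNReal.ofReal ((ZZ i j I m ω)^2)) Filter.atTop ∂μ :=
        lintegral_congr_ae hae
    _ ≤ Filter.liminf (fun m => ∫⁻ ω, ENNReal.ofReal ((ZZ i j I m ω)^2) ∂μ) Filter.atTop := by
        refine lintegral_liminf_le fun m => ?_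
        exact ((measurable_ZZ hmeas m).pow_const 2).ennreal_ofReal
    _ ≤ _ := by
        refine Filter.liminf_le_of_frequently_le' ?_
        exact (Filter.Eventually.of_forall hfm).frequently

end Prob9

section Final
variable {Ω : Type*} [MeasurableSpace Ω] {μ : Measure Ω} [IsProbabilityMeasure μ]
  {I : Fin 3 → ℕ → Ω → ℝ} {i j : ℕ}
  (hmeas : ∀ a k, Measurable (I a k))
  (hindep : iIndepFun
      (fun (p : Fin 3 × ℕ) ω => I p.1 p.2 ω) μ)
  (hrad : ∀ a k, μ {ω | I a k ω = 1} = 1 / 2 ∧ μ {ω | I a k ω = -1} = 1 / 2)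

include hmeas hindep hrad in
lemma main_tendsto (hi : 1 ≤ i) (hj : 1 ≤ j) :
    Filter.Tendsto (fun n => ∫ ω, indE i j I n ω * PP i j I n ω ∂μ)
      Filter.atTop (nhds 0) := by
  have hsum : Summable (fun m => (μ (eSet i j I m)).toReal) :=
    p_summable hmeas hindep hrad hi hj
  set S := ∑' m, (μ (eSet i j I m)).toReal with hS
  -- the tail bound tends to zero
  have htail : Filter.Tendsto
      (fun n => 2 * (S - ∑ m ∈ Finset.range n, (μ (eSet i j I m)).toReal))
      Filter.atTop (nhds 0) := by
    have h1 := hsum.hasSum.tendsto_sum_nat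
    have h2 := (tendsto_const_nhds (x := S) (f := Filter.atTop (α := ℕ))).sub h1
    have := h2.const_mul (2:ℝ)
    simpa [← hS] using this
  -- L1 : the square deviation from the limit
  set L1 : ℕ → ℝ≥0∞ :=
    fun n => ∫⁻ ω, ENNReal.ofReal ((Zinf i j I ω - ZZ i j I n ω)^2) ∂μ with hL1def
  have hL1tend : Filter.Tendsto L1 Filter.atTop (nhds 0) := by
    have hub : ∀ n, L1 n ≤ ENNReal.ofReal
        (2 * (S - ∑ m ∈ Finset.range n, (μ (eSet i j I m)).toReal)) :=
      fun n => fatou_bound hmeas hindep hrad hi hj n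
    have hup : Filter.Tendsto
        (fun n => ENNReal.ofReal (2 * (S - ∑ m ∈ Finset.range n, (μ (eSet i j I m)).toReal)))
        Filter.atTop (nhds 0) := by
      have := ENNReal.tendsto_ofReal htail
      simpa using this
    exact tendsto_of_tendsto_of_tendsto_of_le_of_le tendsto_const_nhds hup
      (fun n => zero_le) hub
  -- L2 : dominated convergence
  set L2 : ℕ → ℝ≥0∞ :=
    fun n => ∫⁻ ω, ENNReal.ofReal (indE i j I n ω * (Zinf i j I ω)^2) ∂μ with hL2def
  have hZfin : (∫⁻ ω, ENNReal.ofReal ((Zinf i j I ω)^2) ∂μ) ≠ ⊤ :=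
    ne_top_of_le_ne_top ENNReal.ofReal_ne_top (zinf_sq_lintegral_le hmeas hindep hrad hi hj)
  have hL2tend : Filter.Tendsto L2 Filter.atTop (nhds 0) := by
    have hdom := tendsto_lintegral_of_dominated_convergence
      (F := fun n ω => ENNReal.ofReal (indE i j I n ω * (Zinf i j I ω)^2))
      (f := fun _ => (0:ℝ≥0∞))
      (bound := fun ω => ENNReal.ofReal ((Zinf i j I ω)^2))
      (μ := μ)
      (fun n => ((measurable_indE hmeas n).mul
        ((measurable_Zinf hmeas).pow_const 2)).ennreal_ofReal)
      (fun n => ae_of_all _ fun ω => by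
        apply ENNReal.ofReal_le_ofReal
        exact mul_le_of_le_one_left (sq_nonneg _) (indE_le_one n ω))
      hZfin
      ?_
    · simpa using hdom
    · filter_upwards [tau_ae_finite hmeas hindep hrad hi hj] with ω hfin
      apply tendsto_atTop_of_eventually_const
        (i₀ := (collisionTime i j (I 0) (I 1) (I 2) ω).toNat)
      intro n hn
      have hle : collisionTime i j (I 0) (I 1) (I 2) ω ≤ (n : ℕ∞) := by
        set c := collisionTime i j (I 0) (I 1) (I 2) ω with hc
        lift c to ℕ using hfin with k hk
        simp only [ENat.toNat_coe] at hn
        exact_mod_cast hn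
      have : ω ∉ eSet i j I n := fun hmem => absurd hle (not_le.mpr hmem)
      rw [indE, Set.indicator_of_notMem this, zero_mul, ENNReal.ofReal_zero]
  -- the target written via lintegral
  set K : ℕ → ℝ≥0∞ :=
    fun n => ∫⁻ ω, ENNReal.ofReal (indE i j I n ω * PP i j I n ω) ∂μ with hKdef
  have hae_nonneg : ∀ n, 0 ≤ᵐ[μ] fun ω => indE i j I n ω * PP i j I n ω := by
    intro n
    filter_upwards [ae_good hrad hmeas] with ω hg
    simp only [Pi.zero_apply]
    by_cases h : ω ∈ eSet i j I n
    · have hpos := dist_pos_of_lt_ct hi hj (fun k => hg 0 k) (fun k => hg 1 k)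
        (fun k => hg 2 k) h
      rw [indE, Set.indicator_of_mem h, PP]
      nlinarith [hpos.1, hpos.2]
    · rw [indE, Set.indicator_of_notMem h, zero_mul]
  have hTrw : ∀ n, ∫ ω, indE i j I n ω * PP i j I n ω ∂μ = (K n).toReal := by
    intro n
    rw [integral_eq_lintegral_of_nonneg_ae (hae_nonneg n)
      (((measurable_indE hmeas n).mul
        ((measurable_distLM hmeas n).mul (measurable_distMR hmeas n))).aestronglyMeasurable)]
  -- key comparison K n ≤ L1 n + L2 n
  have hK_le : ∀ n, K n ≤ L1 n + L2 n := by
    intro n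
    rw [hKdef, hL1def, hL2def]
    rw [← lintegral_add_left
      (f := fun ω => ENNReal.ofReal ((Zinf i j I ω - ZZ i j I n ω)^2)) ((((measurable_Zinf hmeas).sub (measurable_ZZ hmeas n)).pow_const 2).ennreal_ofReal
        : Measurable fun ω => ENNReal.ofReal ((Zinf i j I ω - ZZ i j I n ω)^2))]
    refine lintegral_mono_ae ?_
    filter_upwards [ae_good hrad hmeas] with ω hg
    have key : indE i j I n ω * PP i j I n ω
        ≤ (Zinf i j I ω - ZZ i j I n ω)^2 + indE i j I n ω * (Zinf i j I ω)^2 := by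
      by_cases h : ω ∈ eSet i j I n
      · have hpos := dist_pos_of_lt_ct hi hj (fun k => hg 0 k) (fun k => hg 1 k)
          (fun k => hg 2 k) h
        have hsi : stoppedIdx i j (I 0) (I 1) (I 2) n ω = n :=
          si_of_le _ _ _ _ _ _ (le_of_lt h)
        have hZn : ZZ i j I n ω
            = distLM i (I 0) (I 1) n ω + distMR j (I 1) (I 2) n ω := by
          rw [ZZ, hsi]
        rw [indE, Set.indicator_of_mem h, PP, hZn]
        set A := distLM i (I 0) (I 1) n ω
        set B := distMR j (I 1) (I 2) n ω
        set Y := Zinf i j I ω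
        have hA := hpos.1
        have hB := hpos.2
        nlinarith [sq_nonneg (A - B), sq_nonneg (A + B - 2*Y), sq_nonneg (A + B), sq_nonneg Y]
      · rw [indE, Set.indicator_of_notMem h, zero_mul, zero_mul, add_zero]
        exact sq_nonneg _
    calc ENNReal.ofReal (indE i j I n ω * PP i j I n ω)
        ≤ ENNReal.ofReal ((Zinf i j I ω - ZZ i j I n ω)^2
            + indE i j I n ω * (Zinf i j I ω)^2) := ENNReal.ofReal_le_ofReal key
      _ = ENNReal.ofReal ((Zinf i j I ω - ZZ i j I n ω)^2)
            + ENNReal.ofReal (indE i j I n ω * (Zinf i j I ω)^2) := by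
          rw [ENNReal.ofReal_add (sq_nonneg _)
            (mul_nonneg (indE_nonneg n ω) (sq_nonneg _))]
  have hKtend : Filter.Tendsto K Filter.atTop (nhds 0) := by
    have hsumtend : Filter.Tendsto (fun n => L1 n + L2 n) Filter.atTop (nhds 0) := by
      have := hL1tend.add hL2tend
      simpa using this
    exact tendsto_of_tendsto_of_tendsto_of_le_of_le tendsto_const_nhds hsumtend
      (fun n => zero_le) hK_le
  have : Filter.Tendsto (fun n => (K n).toReal) Filter.atTop (nhds 0) := by
    have h2 := (ENNReal.tendsto_toReal (a := 0) (by simp)).comp hKtend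
    exact h2
  refine Filter.Tendsto.congr (fun n => (hTrw n).symm) this

end Final
/-- **Equation (16).**  For three independent simple symmetric random walks
started from `-2i`, `0`, `2j` (`i, j ≥ 1`) built from independent i.i.d.
Rademacher sequences,
`E[D_{n ∧ τ_C}^{(L,M)} D_{n ∧ τ_C}^{(M,R)}] → 0` as `n → ∞`. -/
theorem stopped_product_tendsto_zero
    {Ω : Type*} [MeasurableSpace Ω] {μ : Measure Ω} [IsProbabilityMeasure μ]
    (I : Fin 3 → ℕ → Ω → ℝ)
    (hmeas : ∀ a k, Measurable (I a k))
    (hindep : iIndepFun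
      (fun (p : Fin 3 × ℕ) ω => I p.1 p.2 ω) μ)
    (hrad : ∀ a k, μ {ω | I a k ω = 1} = 1 / 2 ∧ μ {ω | I a k ω = -1} = 1 / 2)
    (i j : ℕ) (hi : 1 ≤ i) (hj : 1 ≤ j) :
    Filter.Tendsto
      (fun n : ℕ =>
        ∫ ω, distLM i (I 0) (I 1) (stoppedIdx i j (I 0) (I 1) (I 2) n ω) ω *
             distMR j (I 1) (I 2) (stoppedIdx i j (I 0) (I 1) (I 2) n ω) ω ∂μ)
      Filter.atTop (nhds 0) := by
  have hrw : ∀ n : ℕ, (fun ω => distLM i (I 0) (I 1) (stoppedIdx i j (I 0) (I 1) (I 2) n ω) ω *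
      distMR j (I 1) (I 2) (stoppedIdx i j (I 0) (I 1) (I 2) n ω) ω)
      = fun ω => indE i j I n ω * PP i j I n ω := by
    intro n
    funext ω
    by_cases h : ω ∈ eSet i j I n
    · have hlt : (n : ℕ∞) < collisionTime i j (I 0) (I 1) (I 2) ω := h
      rw [si_of_le _ _ _ _ _ _ hlt.le, indE, Set.indicator_of_mem h, PP, one_mul]
    · have hle : collisionTime i j (I 0) (I 1) (I 2) ω ≤ (n : ℕ∞) := not_lt.mp h
      have h0 := prod_si_eq_zero i j (I 0) (I 1) (I 2) ω hle
      rw [prodD] at h0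
      rw [h0, indE, Set.indicator_of_notMem h, zero_mul]
  have : (fun n : ℕ =>
      ∫ ω, distLM i (I 0) (I 1) (stoppedIdx i j (I 0) (I 1) (I 2) n ω) ω *
           distMR j (I 1) (I 2) (stoppedIdx i j (I 0) (I 1) (I 2) n ω) ω ∂μ)
      = fun n => ∫ ω, indE i j I n ω * PP i j I n ω ∂μ := by
    funext n
    rw [hrw n]
  rw [this]
  exact main_tendsto hmeas hindep hrad hi hj
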